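/- Reduction of K_u-satisfiability to one-variable counting-free QK^dec-satisfiability: let φ be a propositional bimodal formula of K_u. Associate with each propositional variable p_k of φ a unary predicate P_k, fix fresh unary predicates S, T, and a fresh unary predicate Q_ψ for each ψ ∈ sub(φ), and define the translation ·^† by: p_k^† = P_k(x), (¬ψ)^† = ¬ψ^†, (ψ₁∧ψ₂)^† = ψ₁^† ∧ ψ₂^†, (◇ψ)^† = ◇(S(x) ∧ ∃x(T(x) ∧ Q_ψ(x))), and (◇_uψ)^† = ∃x ψ^†. Let ζ := ⋀_{ψ∈sub(φ)} ∀x(ψ^† → □Q_ψ(x)) ∧ ⋀_{ψ∈sub(φ)} ∀x(◇Q_ψ(x) → ψ^†). Then φ is satisfiable with respect to K_u if and only if ζ ∧ φ^† is satisfiable with respect to QK^dec. (Note that ζ ∧ φ^† uses only the quantifiers ∃x and ∀x, i.e., it lies in the counting-free one-variable fragment.) -/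

import Mathlib

/-! Syntax of one-variable first-order modal formulas with counting quantifiers:
    φ ::= P(x) | ¬φ | (φ∧φ) | ◇φ | ∃[≤c]x φ. -/

inductive Fml : Type
  | atom : ℕ → Fml
  | neg : Fml → Fml
  | conj : Fml → Fml → Fml
  | dia : Fml → Fml
  | countLe : ℕ → Fml → Fml
deriving DecidableEq

namespace Fml

/-- Subformulas. -/
def sub : Fml → Finset Fml
  | atom n => {atom n}
  | neg ψ => insert (neg ψ) ψ.sub
  | conj ψ χ => insert (conj ψ χ) (ψ.sub ∪ χ.sub)
  | dia ψ => insert (dia ψ) ψ.sub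
  | countLe c ψ => insert (countLe c ψ) ψ.sub

/-- Modal depth. -/
def md : Fml → ℕ
  | atom _ => 0
  | neg ψ => ψ.md
  | conj ψ χ => max ψ.md χ.md
  | dia ψ => ψ.md + 1
  | countLe _ ψ => ψ.md

/-- Capacity: the largest counting-quantifier subscript (0 if none). -/
def cpt : Fml → ℕ
  | atom _ => 0
  | neg ψ => ψ.cpt
  | conj ψ χ => max ψ.cpt χ.cpt
  | dia ψ => ψ.cpt
  | countLe c ψ => max c ψ.cpt

/-- Length of the formula as a string, counting subscripts written in binary. -/
def len : Fml → ℕ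
  | atom _ => 1
  | neg ψ => ψ.len + 1
  | conj ψ χ => ψ.len + χ.len + 1
  | dia ψ => ψ.len + 1
  | countLe c ψ => ψ.len + Nat.size c + 1

/-- Predicate symbols occurring in a formula. -/
def preds : Fml → Finset ℕ
  | atom n => {n}
  | neg ψ => ψ.preds
  | conj ψ χ => ψ.preds ∪ χ.preds
  | dia ψ => ψ.preds
  | countLe _ ψ => ψ.preds

def imp (ψ χ : Fml) : Fml := neg (conj ψ (neg χ))
def or (ψ χ : Fml) : Fml := neg (conj (neg ψ) (neg χ))
def iff (ψ χ : Fml) : Fml := conj (ψ.imp χ) (χ.imp ψ)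
def box (ψ : Fml) : Fml := neg (dia (neg ψ))
/-- `∃x ψ := ¬∃[≤0]x ψ`. -/
def ex (ψ : Fml) : Fml := neg (countLe 0 ψ)
/-- `∀x ψ := ∃[≤0]x ¬ψ`. -/
def fal (ψ : Fml) : Fml := countLe 0 (neg ψ)
/-- A tautology. -/
def top : Fml := neg (conj (atom 0) (neg (atom 0)))

/-- `boxIter n ψ` is `□^n ψ`. -/
def boxIter : ℕ → Fml → Fml
  | 0, ψ => ψ
  | n+1, ψ => (boxIter n ψ).box

/-- `boxLe m ψ` is `⋀_{k=0}^{m} □^k ψ`. -/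
def boxLe : ℕ → Fml → Fml
  | 0, ψ => ψ
  | n+1, ψ => conj (boxLe n ψ) (boxIter (n+1) ψ)

end Fml

/-- A first-order Kripke model `M = (W,R,D,d,I)` (unary predicates suffice for the
one-variable fragment). -/
structure KModel where
  W : Type
  R : W → W → Prop
  D : Type
  Dne : Nonempty D
  dom : W → Set D
  domNe : ∀ w, (dom w).Nonempty
  I : W → ℕ → Set D
  Isub : ∀ w p, I w p ⊆ dom w

/-- Satisfaction `M,w ⊨^a φ`. -/
def KModel.sat (M : KModel) : Fml → M.W → M.D → Prop
  | .atom p, w, a => a ∈ M.I w p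
  | .neg ψ, w, a => ¬ M.sat ψ w a
  | .conj ψ χ, w, a => M.sat ψ w a ∧ M.sat χ w a
  | .dia ψ, w, a => ∃ v, M.R w v ∧ M.sat ψ v a
  | .countLe c ψ, w, _ => {b | b ∈ M.dom w ∧ M.sat ψ w b}.encard ≤ (c : ℕ∞)

def KModel.constDom (M : KModel) : Prop := ∀ u v, M.dom u = M.dom v
def KModel.expDom (M : KModel) : Prop := ∀ u v, M.R u v → M.dom u ⊆ M.dom v
def KModel.decDom (M : KModel) : Prop := ∀ u v, M.R u v → M.dom v ⊆ M.dom u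

/-- Satisfiability with respect to QK (constant domains). -/
def satQK (φ : Fml) : Prop :=
  ∃ M : KModel, M.constDom ∧ ∃ w a, a ∈ M.dom w ∧ M.sat φ w a

/-- Satisfiability with respect to QK^exp (expanding domains). -/
def satQKexp (φ : Fml) : Prop :=
  ∃ M : KModel, M.expDom ∧ ∃ w a, a ∈ M.dom w ∧ M.sat φ w a

/-- Satisfiability with respect to QK^dec (decreasing domains). -/
def satQKdec (φ : Fml) : Prop :=
  ∃ M : KModel, M.decDom ∧ ∃ w a, a ∈ M.dom w ∧ M.sat φ w a

/-- `R` is the immediate-successor (parent–child) relation of a rooted irreflexive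
intransitive tree of depth ≤ m with root `r`. -/
def IsTreeOfDepth {W : Type} (R : W → W → Prop) (r : W) (m : ℕ) : Prop :=
  ∃ depth : W → ℕ,
    depth r = 0 ∧ (∀ w, depth w ≤ m) ∧
    (∀ u v, R u v → depth v = depth u + 1) ∧
    (∀ v, v ≠ r → ∃! u, R u v) ∧
    (∀ v, Relation.ReflTransGen R r v)

/-! Propositional bimodal formulas: `◇` (= ◇_h) and `◇U` (the second modality,
read as the universal modality ◇_u or as the vertical modality ◇_v). -/

inductive BFml : Type
  | var : ℕ → BFml
  | neg : BFml → BFml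
  | conj : BFml → BFml → BFml
  | dia : BFml → BFml
  | diaU : BFml → BFml
deriving DecidableEq

namespace BFml

/-- Subformulas. -/
def subf : BFml → Finset BFml
  | var n => {var n}
  | neg ψ => insert (neg ψ) ψ.subf
  | conj ψ χ => insert (conj ψ χ) (ψ.subf ∪ χ.subf)
  | dia ψ => insert (dia ψ) ψ.subf
  | diaU ψ => insert (diaU ψ) ψ.subf

/-- Modal depth. -/
def md : BFml → ℕ
  | var _ => 0
  | neg ψ => ψ.md
  | conj ψ χ => max ψ.md χ.md
  | dia ψ => ψ.md + 1
  | diaU ψ => ψ.md + 1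

end BFml

/-- Conjunction of a list of formulas. -/
def conjList : List Fml → Fml
  | [] => Fml.top
  | ψ :: rest => Fml.conj ψ (conjList rest)

/-- A model for the bimodal logic K_u: the second modality is the universal one. -/
structure KuModel where
  W : Type
  R : W → W → Prop
  V : ℕ → Set W

def KuModel.sat (M : KuModel) : BFml → M.W → Prop
  | .var p, w => w ∈ M.V p
  | .neg ψ, w => ¬ M.sat ψ w
  | .conj ψ χ, w => M.sat ψ w ∧ M.sat χ w
  | .dia ψ, w => ∃ v, M.R w v ∧ M.sat ψ v
  | .diaU ψ, _ => ∃ v, M.sat ψ v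

/-- Satisfiability with respect to K_u. -/
def satKu (φ : BFml) : Prop := ∃ (M : KuModel) (w : M.W), M.sat φ w

/-- The translation ·^†: `p_k^† = P_k(x)`, commuting with ¬ and ∧,
`(◇ψ)^† = ◇(S(x) ∧ ∃x(T(x) ∧ Q_ψ(x)))`, `(◇_uψ)^† = ∃x ψ^†`. -/
def transDag (P : ℕ → ℕ) (Q : BFml → ℕ) (S T : ℕ) : BFml → Fml
  | .var k => .atom (P k)
  | .neg ψ => .neg (transDag P Q S T ψ)
  | .conj ψ χ => .conj (transDag P Q S T ψ) (transDag P Q S T χ)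
  | .dia ψ => .dia (.conj (.atom S) (Fml.ex (.conj (.atom T) (.atom (Q ψ)))))
  | .diaU ψ => Fml.ex (transDag P Q S T ψ)

/-- `ζ := ⋀_{ψ∈sub(φ)} ∀x(ψ^† → □Q_ψ(x)) ∧ ⋀_{ψ∈sub(φ)} ∀x(◇Q_ψ(x) → ψ^†)`. -/
noncomputable def zeta11 (P : ℕ → ℕ) (Q : BFml → ℕ) (S T : ℕ) (φ : BFml) : Fml :=
  Fml.conj
    (conjList (φ.subf.toList.map fun ψ =>
      Fml.fal ((transDag P Q S T ψ).imp (Fml.box (Fml.atom (Q ψ))))))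
    (conjList (φ.subf.toList.map fun ψ =>
      Fml.fal ((Fml.dia (Fml.atom (Q ψ))).imp (transDag P Q S T ψ))))

/-! From a K_u-model, build a decreasing-domain (in fact constant-domain) model with a root
whose domain is the set of worlds, and one leaf `(u, v)` for every edge `u R v`, where `S` holds
of `u` alone, `T` of `v` alone, and `Q_ψ` of the worlds satisfying `ψ`; then `(◇ψ)^†` holds at
the root of `a` exactly when some edge leaves `a` towards a `ψ`-world. Conversely, at a world `w`
of a decreasing-domain model of `ζ ∧ φ^†`, the domain elements of `w` form a K_u-model in which
`a R b` when some successor of `w` has `S(a)` and `T(b)`; `ζ` makes `Q_ψ` at the successors of `w`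
agree with `ψ^†` at `w`, and decreasing domains keep the `T`-witnesses inside `d(w)`. -/

namespace KModel

variable (M : KModel) (w : M.W) (a : M.D)

lemma sat_fal (ψ : Fml) : M.sat (Fml.fal ψ) w a ↔ ∀ b ∈ M.dom w, M.sat ψ w b := by
  simp [Fml.fal, KModel.sat, Set.eq_empty_iff_forall_notMem]

lemma sat_ex (ψ : Fml) : M.sat (Fml.ex ψ) w a ↔ ∃ b ∈ M.dom w, M.sat ψ w b := by
  simp [Fml.ex, KModel.sat, Set.eq_empty_iff_forall_notMem]

lemma sat_imp (ψ χ : Fml) : M.sat (ψ.imp χ) w a ↔ (M.sat ψ w a → M.sat χ w a) := by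
  simp only [Fml.imp, KModel.sat]
  tauto

lemma sat_box (ψ : Fml) : M.sat ψ.box w a ↔ ∀ v, M.R w v → M.sat ψ v a := by
  simp [Fml.box, KModel.sat]

lemma sat_conjList (l : List Fml) : M.sat (conjList l) w a ↔ ∀ ψ ∈ l, M.sat ψ w a := by
  induction l with
  | nil => simp [conjList, Fml.top, KModel.sat]
  | cons ψ l ih => simp [conjList, KModel.sat, ih]

def QLabelsAt (P : ℕ → ℕ) (Q : BFml → ℕ) (S T : ℕ) (Γ : Finset BFml) : Prop :=
  ∀ ψ ∈ Γ, ∀ b ∈ M.dom w,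
    (M.sat (transDag P Q S T ψ) w b → ∀ v, M.R w v → b ∈ M.I v (Q ψ)) ∧
    ((∃ v, M.R w v ∧ b ∈ M.I v (Q ψ)) → M.sat (transDag P Q S T ψ) w b)

lemma sat_zeta11 (P : ℕ → ℕ) (Q : BFml → ℕ) (S T : ℕ) (φ : BFml) :
    M.sat (zeta11 P Q S T φ) w a ↔ M.QLabelsAt w P Q S T φ.subf := by
  simp only [QLabelsAt, zeta11, KModel.sat, sat_conjList, List.forall_mem_map, Finset.mem_toList, sat_fal,
    sat_imp, sat_box]
  grind

end KModel

lemma BFml.mem_subf_self (ψ : BFml) : ψ ∈ ψ.subf := by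
  cases ψ <;> simp [BFml.subf]

variable {P : ℕ → ℕ} {Q : BFml → ℕ} {S T : ℕ}

namespace KuModel

variable (M : KuModel) (P Q S T)

def edgeR : Option (M.W × M.W) → Option (M.W × M.W) → Prop
  | none, some (u, v) => M.R u v
  | _, _ => False

def edgeI : Option (M.W × M.W) → ℕ → Set M.W
  | none, n => {a | ∃ k, n = P k ∧ a ∈ M.V k}
  | some (u, v), n => {a | (n = S ∧ a = u) ∨ (n = T ∧ a = v) ∨ ∃ ψ, n = Q ψ ∧ M.sat ψ a}

abbrev edgeModel [Nonempty M.W] : KModel where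
  W := Option (M.W × M.W)
  R := M.edgeR
  D := M.W
  Dne := inferInstance
  dom _ := Set.univ
  domNe _ := Set.univ_nonempty
  I := M.edgeI P Q S T
  Isub _ _ := Set.subset_univ _

variable {M P Q S T}

lemma mem_edgeI_leaf_S (hQS : ∀ ψ, Q ψ ≠ S) (hST : S ≠ T) (u v a : M.W) :
    a ∈ M.edgeI P Q S T (some (u, v)) S ↔ a = u := by
  simp [edgeI, hST, fun ψ => (hQS ψ).symm]

lemma mem_edgeI_leaf_T (hQT : ∀ ψ, Q ψ ≠ T) (hST : S ≠ T) (u v a : M.W) :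
    a ∈ M.edgeI P Q S T (some (u, v)) T ↔ a = v := by
  simp [edgeI, hST.symm, fun ψ => (hQT ψ).symm]

lemma mem_edgeI_leaf_Q (hQinj : Q.Injective) (hQS : ∀ ψ, Q ψ ≠ S) (hQT : ∀ ψ, Q ψ ≠ T)
    (u v a : M.W) (ψ : BFml) :
    a ∈ M.edgeI P Q S T (some (u, v)) (Q ψ) ↔ M.sat ψ a := by
  simp [edgeI, hQS, hQT, hQinj.eq_iff]

variable [Nonempty M.W]

lemma edgeModel_decDom : (M.edgeModel P Q S T).decDom :=
  fun _ _ _ => subset_rfl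

lemma edgeModel_sat_transDag (hPinj : P.Injective) (hQinj : Q.Injective)
    (hQS : ∀ ψ, Q ψ ≠ S) (hQT : ∀ ψ, Q ψ ≠ T) (hST : S ≠ T) (ψ : BFml) (a : M.W) :
    (M.edgeModel P Q S T).sat (transDag P Q S T ψ) none a ↔ M.sat ψ a := by
  induction ψ generalizing a with
  | var k => simp [transDag, KModel.sat, KuModel.sat, edgeI, hPinj.eq_iff]
  | neg ψ ih => exact not_congr (ih a)
  | conj ψ χ ih₁ ih₂ => exact and_congr (ih₁ a) (ih₂ a)
  | dia ψ =>
    change (∃ e, M.edgeR none e ∧ a ∈ M.edgeI P Q S T e S ∧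
        (M.edgeModel P Q S T).sat (Fml.ex _) e a) ↔ ∃ v, M.R a v ∧ M.sat ψ v
    simp [KModel.sat_ex, KModel.sat, Option.exists, edgeR, mem_edgeI_leaf_S hQS hST,
      mem_edgeI_leaf_T hQT hST, mem_edgeI_leaf_Q hQinj hQS hQT]
  | diaU ψ ih =>
    change (M.edgeModel P Q S T).sat (Fml.ex _) none a ↔ ∃ b, M.sat ψ b
    simp [KModel.sat_ex, ih]

lemma edgeModel_sat_zeta11 (hPinj : P.Injective) (hQinj : Q.Injective)
    (hQS : ∀ ψ, Q ψ ≠ S) (hQT : ∀ ψ, Q ψ ≠ T) (hST : S ≠ T) (φ : BFml) (a : M.W) :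
    (M.edgeModel P Q S T).sat (zeta11 P Q S T φ) none a := by
  rw [KModel.sat_zeta11]
  intro ψ _ b _
  have hleaf : ∀ e, (M.edgeModel P Q S T).R none e →
      (b ∈ M.edgeI P Q S T e (Q ψ) ↔ M.sat ψ b) := by
    rintro (_ | ⟨u, v⟩) he
    · exact he.elim
    · exact mem_edgeI_leaf_Q hQinj hQS hQT u v b ψ
  rw [edgeModel_sat_transDag hPinj hQinj hQS hQT hST]
  exact ⟨fun hψ e he => (hleaf e he).2 hψ, fun ⟨e, he, hbQ⟩ => (hleaf e he).1 hbQ⟩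

end KuModel

namespace KModel

variable (N : KModel) (P S T)

abbrev kuModelAt (w : N.W) : KuModel where
  W := N.dom w
  R a b := ∃ v, N.R w v ∧ a.1 ∈ N.I v S ∧ b.1 ∈ N.I v T
  V k := {a | a.1 ∈ N.I w (P k)}

variable {N P S T}

lemma kuModelAt_sat (hdec : N.decDom) {w : N.W} {Γ : Finset BFml}
    (hΓ : N.QLabelsAt w P Q S T Γ)
    (ψ : BFml) (hψ : ψ.subf ⊆ Γ) (a : N.dom w) :
    (N.kuModelAt P S T w).sat ψ a ↔ N.sat (transDag P Q S T ψ) w a := by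
  induction ψ generalizing a with
  | var k => rfl
  | neg ψ ih =>
    exact not_congr (ih (Finset.insert_subset_iff.1 hψ).2 a)
  | conj ψ χ ih₁ ih₂ =>
    obtain ⟨-, hsub⟩ := Finset.insert_subset_iff.1 hψ
    exact and_congr (ih₁ (Finset.union_subset_left hsub) a)
      (ih₂ (Finset.union_subset_right hsub) a)
  | dia ψ ih =>
    have hsub := (Finset.insert_subset_iff.1 hψ).2
    have hψΓ := hΓ ψ (hsub ψ.mem_subf_self)
    change (∃ b : N.dom w, (∃ v, N.R w v ∧ a.1 ∈ N.I v S ∧ b.1 ∈ N.I v T) ∧ _) ↔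
      ∃ v, N.R w v ∧ a.1 ∈ N.I v S ∧ N.sat (Fml.ex _) v a
    simp only [sat_ex, ih hsub]
    constructor
    · rintro ⟨b, ⟨v, hv, haS, hbT⟩, hb⟩
      exact ⟨v, hv, haS, b, N.Isub v T hbT, hbT, (hψΓ b b.2).1 hb v hv⟩
    · rintro ⟨v, hv, haS, b, hbv, hbT, hbQ⟩
      have hbw : b ∈ N.dom w := hdec w v hv hbv
      exact ⟨⟨b, hbw⟩, ⟨v, hv, haS, hbT⟩, (hψΓ b hbw).2 ⟨v, hv, hbQ⟩⟩
  | diaU ψ ih =>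
    change (∃ b : N.dom w, _) ↔ N.sat (Fml.ex _) w a
    simp only [sat_ex, ih (Finset.insert_subset_iff.1 hψ).2]
    exact ⟨fun ⟨b, hb⟩ => ⟨b, b.2, hb⟩, fun ⟨b, hbw, hb⟩ => ⟨⟨b, hbw⟩, hb⟩⟩

end KModel

theorem stmt_11_general (φ : BFml) (P : ℕ → ℕ) (Q : BFml → ℕ) (S T : ℕ)
    (hPinj : Function.Injective P) (hQinj : Function.Injective Q)
    (hQS : ∀ ψ, Q ψ ≠ S) (hQT : ∀ ψ, Q ψ ≠ T) (hST : S ≠ T) :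
    satKu φ ↔ satQKdec (Fml.conj (zeta11 P Q S T φ) (transDag P Q S T φ)) := by
  constructor
  · rintro ⟨M, w, hφ⟩
    have : Nonempty M.W := ⟨w⟩
    exact ⟨M.edgeModel P Q S T, KuModel.edgeModel_decDom, none, w, trivial,
      KuModel.edgeModel_sat_zeta11 hPinj hQinj hQS hQT hST φ w,
      (KuModel.edgeModel_sat_transDag hPinj hQinj hQS hQT hST φ w).2 hφ⟩
  · rintro ⟨N, hdec, w, a, ha, hζ, hφ⟩
    rw [KModel.sat_zeta11] at hζ
    exact ⟨N.kuModelAt P S T w, ⟨a, ha⟩, (KModel.kuModelAt_sat hdec hζ φ subset_rfl ⟨a, ha⟩).2 hφ⟩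

/-- with P_k, S, T, Q_ψ pairwise distinct fresh unary predicates,
φ is satisfiable with respect to K_u iff `ζ ∧ φ^†` is satisfiable with respect to
QK^dec. -/
theorem stmt_11 (φ : BFml) (P : ℕ → ℕ) (Q : BFml → ℕ) (S T : ℕ)
    (hPinj : Function.Injective P) (hQinj : Function.Injective Q)
    (hPQ : ∀ k ψ, P k ≠ Q ψ) (hPS : ∀ k, P k ≠ S) (hPT : ∀ k, P k ≠ T)
    (hQS : ∀ ψ, Q ψ ≠ S) (hQT : ∀ ψ, Q ψ ≠ T) (hST : S ≠ T) :
    satKu φ ↔ satQKdec (Fml.conj (zeta11 P Q S T φ) (transDag P Q S T φ)) :=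
  stmt_11_general φ P Q S T hPinj hQinj hQS hQT hST
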